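/- Let E be a reflexive Banach space that embeds continuously into a normed space Y with embedding constant S⁻¹ (i.e., ‖u‖_Y ≤ S⁻¹‖u‖_E for all u). Suppose I : E → ℝ satisfies, for constants 1 < s⁺ < p⁻ < t⁺ and C₁ > 1, λ, θ > 0: I(u) ≥ (1/p⁺)‖u‖^{p⁻} − (C₁^{s⁺}λ/s⁻)‖u‖^{s⁺} − (C₁^{t⁺}θ/t⁻)‖u‖^{t⁺} for ‖u‖ ≥ 1, where also p⁺ ≥ p⁻, etc. Define g_λ(τ) = (1/p⁺)τ^{p⁻} − (C₁^{s⁺}λ/s⁻)τ^{s⁺} − (C₁^{t⁺}θ/t⁻)τ^{t⁺}. If λ < c₀ θ^{(s⁺−p⁻)/(t⁺−p⁻)} where c₀ is the explicit constant c₀ = a₀^{(t⁺−s⁺)/(t⁺−p⁻)} b₀^{(s⁺−p⁻)/(t⁺−p⁻)} ((p⁻−s⁺)/(t⁺−s⁺))^{(p⁻−s⁺)/(t⁺−p⁻)} (t⁺−p⁻)/(t⁺−s⁺) with a₀ = s⁻/(p⁺C₁^{s⁺}) and b₀ = s⁻C₁^{t⁺−s⁺}/t⁻, then g_λ has exactly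 two positive roots T₀ < T₁, and g_λ(τ) < 0 on (0,T₀) ∪ (T₁,∞) while g_λ(τ) > 0 on (T₀,T₁). -/

import Mathlib

/-!
Dividing by the positive factor `C₁^{s⁺} τ^{s⁺} / s⁻` turns `g_λ(τ) = 0` into `h(τ) = λ`, where
`h(τ) = a τ^α − b τ^β` with `α = p⁻ − s⁺ < β = t⁺ − s⁺` and `a = a₀`, `b = b₀ θ`. Since
`h'(τ) = τ^{α-1} (a α − b β τ^{β-α})`, the function `h` increases from `h(0) = 0` up to its
maximum at `τ* = (a α / (b β))^{1/(β-α)}` and then decreases to `-∞`. The maximum value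
`h(τ*) = a (β − α)/β · (a α / (b β))^{α/(β-α)}` is exactly `c₀ θ^{(s⁺−p⁻)/(t⁺−p⁻)}`, so for
`0 < λ < h(τ*)` the intermediate value theorem and strict monotonicity on either side of `τ*`
give exactly two crossings of the level `λ`.
-/

open Real Set

structure CrossesLevelTwice (f : ℝ → ℝ) (c T₀ T₁ : ℝ) : Prop where
  pos : 0 < T₀
  lt : T₀ < T₁
  eq_left : f T₀ = c
  eq_right : f T₁ = c
  lt_of_lt_left : ∀ τ, 0 < τ → τ < T₀ → f τ < c
  lt_of_right_lt : ∀ τ, T₁ < τ → f τ < c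
  gt_of_mem_Ioo : ∀ τ, T₀ < τ → τ < T₁ → c < f τ

namespace CrossesLevelTwice

variable {f : ℝ → ℝ} {c T₀ T₁ : ℝ}

theorem eq_or_eq_of_eq (h : CrossesLevelTwice f c T₀ T₁) {τ : ℝ} (hτ : 0 < τ) (hfτ : f τ = c) :
    τ = T₀ ∨ τ = T₁ := by
  rcases lt_trichotomy τ T₀ with hlt | rfl | hgt
  · exact absurd hfτ (h.lt_of_lt_left τ hτ hlt).ne
  · exact Or.inl rfl
  rcases lt_trichotomy τ T₁ with hlt | rfl | hgt'
  · exact absurd hfτ (h.gt_of_mem_Ioo τ hgt hlt).ne'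
  · exact Or.inr rfl
  · exact absurd hfτ (h.lt_of_right_lt τ hgt').ne

theorem of_eq_mul_sub {g K : ℝ → ℝ} (h : CrossesLevelTwice f c T₀ T₁)
    (hK : ∀ τ, 0 < τ → 0 < K τ) (hg : ∀ τ, 0 < τ → g τ = K τ * (f τ - c)) :
    CrossesLevelTwice g 0 T₀ T₁ where
  pos := h.pos
  lt := h.lt
  eq_left := by rw [hg _ h.pos, h.eq_left, sub_self, mul_zero]
  eq_right := by rw [hg _ (h.pos.trans h.lt), h.eq_right, sub_self, mul_zero]
  lt_of_lt_left τ hτ hτT₀ := by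
    rw [hg τ hτ]
    exact mul_neg_of_pos_of_neg (hK τ hτ) (sub_neg.2 (h.lt_of_lt_left τ hτ hτT₀))
  lt_of_right_lt τ hT₁τ := by
    have hτ : 0 < τ := h.pos.trans (h.lt.trans hT₁τ)
    rw [hg τ hτ]
    exact mul_neg_of_pos_of_neg (hK τ hτ) (sub_neg.2 (h.lt_of_right_lt τ hT₁τ))
  gt_of_mem_Ioo τ hT₀τ hτT₁ := by
    have hτ : 0 < τ := h.pos.trans hT₀τ
    rw [hg τ hτ]
    exact mul_pos (hK τ hτ) (sub_pos.2 (h.gt_of_mem_Ioo τ hT₀τ hτT₁))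

theorem exists_of_unimodal {m X : ℝ} (hf : ContinuousOn f (Ici 0)) (hm : 0 ≤ m) (hmX : m ≤ X)
    (hmono : StrictMonoOn f (Icc 0 m)) (hanti : StrictAntiOn f (Ici m))
    (h0 : f 0 < c) (hcm : c < f m) (hX : f X < c) :
    ∃ T₀ T₁, CrossesLevelTwice f c T₀ T₁ := by
  obtain ⟨T₀, ⟨hT₀, hT₀m⟩, hfT₀⟩ :=
    intermediate_value_Ioo hm (hf.mono Icc_subset_Ici_self) ⟨h0, hcm⟩
  obtain ⟨T₁, ⟨hmT₁, -⟩, hfT₁⟩ :=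
    intermediate_value_Ioo' hmX (hf.mono (Icc_subset_Ici_self.trans (Ici_subset_Ici.2 hm)))
      ⟨hX, hcm⟩
  refine ⟨T₀, T₁, ⟨hT₀, hT₀m.trans hmT₁, hfT₀, hfT₁, ?_, ?_, ?_⟩⟩
  · intro τ hτ hτT₀
    rw [← hfT₀]
    exact hmono ⟨hτ.le, (hτT₀.trans hT₀m).le⟩ ⟨hT₀.le, hT₀m.le⟩ hτT₀
  · intro τ hT₁τ
    rw [← hfT₁]
    exact hanti (mem_Ici.2 hmT₁.le) (mem_Ici.2 (hmT₁.trans hT₁τ).le) hT₁τ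
  · intro τ hT₀τ hτT₁
    rcases le_or_gt τ m with hτm | hmτ
    · rw [← hfT₀]
      exact hmono ⟨hT₀.le, hT₀m.le⟩ ⟨(hT₀.trans hT₀τ).le, hτm⟩ hT₀τ
    · rw [← hfT₁]
      exact hanti (mem_Ici.2 hmτ.le) (mem_Ici.2 hmT₁.le) hτT₁

end CrossesLevelTwice

noncomputable def powDiff (a b α β τ : ℝ) : ℝ := a * τ ^ α - b * τ ^ β

noncomputable def powDiffArgmax (a b α β : ℝ) : ℝ := (a * α / (b * β)) ^ (β - α)⁻¹

noncomputable def powDiffMax (a b α β : ℝ) : ℝ :=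
  a * (β - α) / β * (a * α / (b * β)) ^ (α / (β - α))

section PowDiff

variable {a b α β : ℝ}

theorem powDiff_zero (hα : 0 < α) (hβ : 0 < β) : powDiff a b α β 0 = 0 := by
  simp [powDiff, zero_rpow hα.ne', zero_rpow hβ.ne']

theorem continuous_powDiff (hα : 0 ≤ α) (hβ : 0 ≤ β) : Continuous (powDiff a b α β) :=
  (continuous_const.mul (continuous_rpow_const hα)).sub
    (continuous_const.mul (continuous_rpow_const hβ))

theorem powDiff_eq_mul {τ : ℝ} (hτ : 0 < τ) :
    powDiff a b α β τ = τ ^ α * (a - b * τ ^ (β - α)) := by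
  rw [powDiff, mul_sub, ← mul_assoc, mul_comm (τ ^ α) b, mul_assoc, ← rpow_add hτ,
    add_sub_cancel, mul_comm]

theorem hasDerivAt_powDiff {x : ℝ} (hx : 0 < x) :
    HasDerivAt (powDiff a b α β) (x ^ (α - 1) * (a * α - b * β * x ^ (β - α))) x := by
  have hderiv : HasDerivAt (fun y => a * y ^ α - b * y ^ β) _ x :=
    ((hasDerivAt_rpow_const (p := α) (Or.inl hx.ne')).const_mul a).sub
      ((hasDerivAt_rpow_const (p := β) (Or.inl hx.ne')).const_mul b)
  refine hderiv.congr_deriv ?_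
  rw [show β - 1 = (α - 1) + (β - α) by ring, rpow_add hx]
  ring

theorem powDiff_nonpos_of_le_rpow (hb : 0 < b) {X : ℝ} (hX : 0 < X) (haX : a / b ≤ X ^ (β - α)) :
    powDiff a b α β X ≤ 0 := by
  rw [powDiff_eq_mul hX]
  rw [div_le_iff₀ hb] at haX
  exact mul_nonpos_of_nonneg_of_nonpos (rpow_pos_of_pos hX _).le (by linarith)

variable (ha : 0 < a) (hb : 0 < b) (hα : 0 < α) (hαβ : α < β)
include ha hb hα hαβ

theorem powDiffArgmax_pos : 0 < powDiffArgmax a b α β :=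
  rpow_pos_of_pos (by have := hα.trans hαβ; positivity) _

theorem powDiffArgmax_rpow : powDiffArgmax a b α β ^ (β - α) = a * α / (b * β) :=
  rpow_inv_rpow (by have := hα.trans hαβ; positivity) (sub_pos.2 hαβ).ne'

theorem strictMonoOn_powDiff : StrictMonoOn (powDiff a b α β) (Icc 0 (powDiffArgmax a b α β)) := by
  refine strictMonoOn_of_deriv_pos (convex_Icc _ _)
    (continuous_powDiff hα.le (hα.trans hαβ).le).continuousOn fun x hx => ?_
  rw [interior_Icc] at hx
  rw [(hasDerivAt_powDiff hx.1).deriv]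
  have hxδ : x ^ (β - α) < a * α / (b * β) := by
    rw [← powDiffArgmax_rpow ha hb hα hαβ]
    exact rpow_lt_rpow hx.1.le hx.2 (sub_pos.2 hαβ)
  have : b * β * x ^ (β - α) < a * α := by
    rw [lt_div_iff₀ (by have := hα.trans hαβ; positivity)] at hxδ
    linarith
  exact mul_pos (rpow_pos_of_pos hx.1 _) (by linarith)

theorem strictAntiOn_powDiff : StrictAntiOn (powDiff a b α β) (Ici (powDiffArgmax a b α β)) := by
  refine strictAntiOn_of_deriv_neg (convex_Ici _)
    (continuous_powDiff hα.le (hα.trans hαβ).le).continuousOn fun x hx => ?_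
  rw [interior_Ici] at hx
  have hx0 : 0 < x := (powDiffArgmax_pos ha hb hα hαβ).trans hx
  rw [(hasDerivAt_powDiff hx0).deriv]
  have hxδ : a * α / (b * β) < x ^ (β - α) := by
    rw [← powDiffArgmax_rpow ha hb hα hαβ]
    exact rpow_lt_rpow (powDiffArgmax_pos ha hb hα hαβ).le hx (sub_pos.2 hαβ)
  have : a * α < b * β * x ^ (β - α) := by
    rw [div_lt_iff₀ (by have := hα.trans hαβ; positivity)] at hxδ
    linarith
  exact mul_neg_of_pos_of_neg (rpow_pos_of_pos hx0 _) (by linarith)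

theorem powDiff_powDiffArgmax :
    powDiff a b α β (powDiffArgmax a b α β) = powDiffMax a b α β := by
  have hβ : 0 < β := hα.trans hαβ
  rw [powDiff_eq_mul (powDiffArgmax_pos ha hb hα hαβ), powDiffArgmax_rpow ha hb hα hαβ,
    powDiffArgmax, ← rpow_mul (by positivity), powDiffMax, inv_mul_eq_div]
  field_simp

theorem exists_crossesLevelTwice_powDiff {c : ℝ} (hc : 0 < c) (hcmax : c < powDiffMax a b α β) :
    ∃ T₀ T₁, CrossesLevelTwice (powDiff a b α β) c T₀ T₁ := by
  have hm := powDiffArgmax_pos ha hb hα hαβ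
  -- past `(a / b)^{1/(β-α)}` the negative term dominates
  set X := max (powDiffArgmax a b α β) ((a / b) ^ (β - α)⁻¹)
  have hX : 0 < X := hm.trans_le (le_max_left _ _)
  have haX : a / b ≤ X ^ (β - α) := by
    calc a / b = ((a / b) ^ (β - α)⁻¹) ^ (β - α) :=
          (rpow_inv_rpow (by positivity) (sub_pos.2 hαβ).ne').symm
      _ ≤ X ^ (β - α) := rpow_le_rpow (by positivity) (le_max_right _ _) (sub_pos.2 hαβ).le
  refine CrossesLevelTwice.exists_of_unimodal (X := X)
    (continuous_powDiff hα.le (hα.trans hαβ).le).continuousOn hm.le (le_max_left _ _)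
    (strictMonoOn_powDiff ha hb hα hαβ) (strictAntiOn_powDiff ha hb hα hαβ) ?_ ?_ ?_
  · rwa [powDiff_zero hα (hα.trans hαβ)]
  · rwa [powDiff_powDiffArgmax ha hb hα hαβ]
  · exact (powDiff_nonpos_of_le_rpow hb hX haX).trans_lt hc

end PowDiff

theorem powDiffMax_eq {a₀ b₀ θ s p t : ℝ} (ha : 0 < a₀) (hb : 0 < b₀) (hθ : 0 < θ)
    (hsp : s < p) (hpt : p < t) :
    a₀ ^ ((t - s) / (t - p)) * b₀ ^ ((s - p) / (t - p)) *
      ((p - s) / (t - s)) ^ ((p - s) / (t - p)) * ((t - p) / (t - s)) *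
      θ ^ ((s - p) / (t - p)) = powDiffMax a₀ (b₀ * θ) (p - s) (t - s) := by
  have hts : 0 < t - s := by linarith
  have htp : 0 < t - p := by linarith
  set e := (p - s) / (t - p) with he
  have hr : 0 < (p - s) / (t - s) := div_pos (by linarith) hts
  rw [powDiffMax, show t - s - (p - s) = t - p by ring, ← he,
    show (s - p) / (t - p) = -e by rw [he]; ring,
    show (t - s) / (t - p) = 1 + e by rw [he]; field_simp; ring,
    show a₀ * (p - s) / (b₀ * θ * (t - s)) = a₀ * ((p - s) / (t - s)) * (b₀ * θ)⁻¹ by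
      field_simp,
    rpow_add ha, rpow_one, rpow_neg hb.le, rpow_neg hθ.le,
    mul_rpow (by positivity) (by positivity), mul_rpow ha.le hr.le,
    inv_rpow (by positivity), mul_rpow hb.le hθ.le]
  have : b₀ ^ e ≠ 0 := (rpow_pos_of_pos hb _).ne'
  have : θ ^ e ≠ 0 := (rpow_pos_of_pos hθ _).ne'
  field_simp

theorem rpow_combination_eq_mul_powDiff_sub {sm sP pm pP tm tP C lam θ τ : ℝ}
    (hτ : 0 < τ) (hC : 0 < C) (hsm : sm ≠ 0) (hpP : pP ≠ 0) (htm : tm ≠ 0) :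
    1 / pP * τ ^ pm - C ^ sP * lam / sm * τ ^ sP - C ^ tP * θ / tm * τ ^ tP =
      C ^ sP / sm * τ ^ sP *
        (powDiff (sm / (pP * C ^ sP)) (sm * C ^ (tP - sP) / tm * θ) (pm - sP) (tP - sP) τ
          - lam) := by
  have hCsP : C ^ sP ≠ 0 := (rpow_pos_of_pos hC _).ne'
  rw [powDiff, show tP = sP + (tP - sP) by ring, show pm = sP + (pm - sP) by ring,
    rpow_add hτ, rpow_add hτ, rpow_add hC]
  simp only [add_sub_cancel_left]
  field_simp
  ring

/-- for `λ < c₀ θ^{(s⁺−p⁻)/(t⁺−p⁻)}`, the function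
`g_λ(τ) = (1/p⁺)τ^{p⁻} − (C₁^{s⁺}λ/s⁻)τ^{s⁺} − (C₁^{t⁺}θ/t⁻)τ^{t⁺}` has exactly two
positive roots `T₀ < T₁`, is negative on `(0,T₀) ∪ (T₁,∞)` and positive on `(T₀,T₁)`. -/
theorem stmt11 (sm sP pm pP tm tP C₁ lam θ : ℝ)
    (hsm : 1 < sm) (hs : sm ≤ sP) (hsp : sP < pm) (hp : pm ≤ pP) (hpt : pP < tm)
    (ht : tm ≤ tP) (hC₁ : 1 < C₁) (hθ : 0 < θ) (hlam : 0 < lam)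
    (a₀ b₀ c₀ : ℝ)
    (ha₀ : a₀ = sm / (pP * C₁ ^ sP))
    (hb₀ : b₀ = sm * C₁ ^ (tP - sP) / tm)
    (hc₀ : c₀ = a₀ ^ ((tP - sP) / (tP - pm)) * b₀ ^ ((sP - pm) / (tP - pm)) *
      ((pm - sP) / (tP - sP)) ^ ((pm - sP) / (tP - pm)) * ((tP - pm) / (tP - sP)))
    (hsmall : lam < c₀ * θ ^ ((sP - pm) / (tP - pm))) :
    let g : ℝ → ℝ := fun τ =>
      (1 / pP) * τ ^ pm - (C₁ ^ sP * lam / sm) * τ ^ sP - (C₁ ^ tP * θ / tm) * τ ^ tP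
    ∃ T₀ T₁ : ℝ, 0 < T₀ ∧ T₀ < T₁ ∧ g T₀ = 0 ∧ g T₁ = 0 ∧
      (∀ τ : ℝ, 0 < τ → τ < T₀ → g τ < 0) ∧
      (∀ τ : ℝ, T₁ < τ → g τ < 0) ∧
      (∀ τ : ℝ, T₀ < τ → τ < T₁ → 0 < g τ) ∧
      (∀ τ : ℝ, 0 < τ → g τ = 0 → τ = T₀ ∨ τ = T₁) := by
  intro g
  have hC₁0 : 0 < C₁ := by linarith
  have hsm0 : 0 < sm := by linarith
  have hpP0 : 0 < pP := by linarith
  have htm0 : 0 < tm := by linarith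
  have ha₀pos : 0 < a₀ := by rw [ha₀]; positivity
  have hb₀pos : 0 < b₀ := by rw [hb₀]; positivity
  have hlam_max : lam < powDiffMax a₀ (b₀ * θ) (pm - sP) (tP - sP) := by
    rwa [← powDiffMax_eq ha₀pos hb₀pos hθ hsp (by linarith), ← hc₀]
  obtain ⟨T₀, T₁, hh⟩ := exists_crossesLevelTwice_powDiff ha₀pos (mul_pos hb₀pos hθ)
    (sub_pos.2 hsp) (by linarith) hlam hlam_max
  have hg : CrossesLevelTwice g 0 T₀ T₁ :=
    hh.of_eq_mul_sub (K := fun τ => C₁ ^ sP / sm * τ ^ sP)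
      (fun τ hτ => by have := rpow_pos_of_pos hτ sP; have := rpow_pos_of_pos hC₁0 sP; positivity)
      (fun τ hτ => by
        rw [ha₀, hb₀]
        exact rpow_combination_eq_mul_powDiff_sub hτ hC₁0 hsm0.ne' hpP0.ne' htm0.ne')
  exact ⟨T₀, T₁, hg.pos, hg.lt, hg.eq_left, hg.eq_right, hg.lt_of_lt_left, hg.lt_of_right_lt,
    hg.gt_of_mem_Ioo, fun τ hτ hgτ => hg.eq_or_eq_of_eq hτ hgτ⟩
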